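/- A minimal Ferrers-bad bipartite graph (one for which T(G) > F(G) but every proper subgraph arising from splitting at a cutvertex is Ferrers-good) has no cutvertex; that is, if a connected bipartite graph G has a cutvertex, and both pieces G₁, G₂ of the decomposition at the cutvertex are Ferrers-good, then G is Ferrers-good. -/

import Mathlib

noncomputable section
open scoped Classical

def spanningTreeCount {V : Type*} (G : SimpleGraph V) : ℕ :=
  {H : G.Subgraph | H.IsSpanning ∧ H.coe.IsTree}.ncard

def sdeg {V : Type*} (G : SimpleGraph V) (v : V) : ℕ := (G.neighborSet v).ncard

def IsBipartitionOn {V : Type*} (G : SimpleGraph V) (X Y : Set V) : Prop :=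
  Disjoint X Y ∧ X ∪ Y = Set.univ ∧
    ∀ u v, G.Adj u v → (u ∈ X ∧ v ∈ Y) ∨ (u ∈ Y ∧ v ∈ X)

def FerrersGood {V : Type*} [Fintype V] (G : SimpleGraph V) (X Y : Set V) : Prop :=
  (spanningTreeCount G : ℚ) ≤
    (∏ v : V, (sdeg G v : ℚ)) / ((X.ncard : ℚ) * (Y.ncard : ℚ))

/-! Write `G₁ = H₁`, `G₂ = H₂`, `dᵢ` for the degree of `x` in `Gᵢ`, and `a, b` (resp. `c, d`)
for the sizes of the colour classes of `G₁` (resp. `G₂`), with `x` on the `a`- and `c`-sides.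
Restricting a spanning tree of `G` to `G₁` and to `G₂` gives spanning trees of both (a tree path
between two vertices of `G₁` cannot leave `G₁`, as it would pass through `x` twice), and the pair
determines the tree, so `T(G) ≤ T(G₁) T(G₂)`. Only the degree of `x` changes, to `d₁ + d₂`, and
the colour classes of `G` have sizes `a + c - 1` and `b + d`. As `dᵢ` is at most the size of the
opposite class, `F(G₁) F(G₂) ≤ F(G)` reduces to `d₁ d₂ (a + c - 1)(b + d) ≤ (d₁ + d₂) a b c d`,
which follows from `a + c - 1 ≤ a c` and `d₁ d₂ (b + d) ≤ (d₁ + d₂) b d`. -/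

lemma div_mul_div_le_add_div {𝕜 : Type*} [Field 𝕜] [LinearOrder 𝕜] [IsStrictOrderedRing 𝕜]
    {a b c d p q : 𝕜} (ha : 1 ≤ a) (hc : 1 ≤ c) (hp : 0 ≤ p) (hpb : p ≤ b) (hq : 0 ≤ q)
    (hqd : q ≤ d) : p / (a * b) * (q / (c * d)) ≤ (p + q) / ((a + c - 1) * (b + d)) := by
  have hden : 0 ≤ (a + c - 1) * (b + d) := mul_nonneg (by linarith) (by linarith)
  rcases hp.eq_or_lt with rfl | hp
  · simpa using div_nonneg hq hden
  rcases hq.eq_or_lt with rfl | hq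
  · simpa using div_nonneg hp.le hden
  have hb : 0 < b := hp.trans_le hpb
  have hd : 0 < d := hq.trans_le hqd
  rw [div_mul_div_comm, div_le_div_iff₀ (by positivity) (by nlinarith)]
  have hac : a + c - 1 ≤ a * c := by nlinarith
  have hbd : p * q * (b + d) ≤ (p + q) * (b * d) := by
    nlinarith [mul_le_mul_of_nonneg_left hqd (mul_pos hp hb).le,
      mul_le_mul_of_nonneg_left hpb (mul_pos hq hd).le]
  calc p * q * ((a + c - 1) * (b + d)) = (a + c - 1) * (p * q * (b + d)) := by ring
    _ ≤ (a * c) * ((p + q) * (b * d)) := by gcongr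
    _ = (p + q) * (a * b * (c * d)) := by ring

lemma Finset.prod_univ_eq_mul_prod_erase_mul_prod_erase {α M : Type*} [Fintype α] [CommMonoid M]
    {s t : Set α} {x : α} (hst : s ∪ t = Set.univ) (hmeet : s ∩ t = {x}) (f : α → M) :
    ∏ a, f a = f x * (∏ a ∈ s.toFinset.erase x, f a) * ∏ a ∈ t.toFinset.erase x, f a := by
  have huniv : (Finset.univ : Finset α) = insert x (s.toFinset.erase x ∪ t.toFinset.erase x) := by
    ext a
    have : a ∈ s ∨ a ∈ t := by simp [← Set.mem_union, hst]
    by_cases hax : a = x <;> simp_all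
  have hdisj : Disjoint (s.toFinset.erase x) (t.toFinset.erase x) := by
    refine Finset.disjoint_left.2 fun a ha hb => (Finset.mem_erase.1 ha).1 ?_
    have : a ∈ s ∩ t := ⟨Set.mem_toFinset.1 (Finset.mem_erase.1 ha).2,
      Set.mem_toFinset.1 (Finset.mem_erase.1 hb).2⟩
    rwa [hmeet] at this
  rw [huniv, Finset.prod_insert (by simp), Finset.prod_union hdisj, mul_assoc]

lemma Fintype.prod_subtype_eq_mul_prod_erase {α M : Type*} [Fintype α] [CommMonoid M]
    {s : Set α} {x : α} (hx : x ∈ s) (F : s → M) (f : α → M)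
    (hF : ∀ v : s, v.1 ≠ x → F v = f v) :
    ∏ v, F v = F ⟨x, hx⟩ * ∏ a ∈ s.toFinset.erase x, f a := by
  rw [← Finset.mul_prod_erase _ F (Finset.mem_univ ⟨x, hx⟩)]
  congr 1
  refine Finset.prod_bij (fun v _ => v.1) (fun v hv => ?_) (fun v _ w _ h => Subtype.ext h)
    (fun a ha => ?_) (fun v hv => hF v fun h => (Finset.mem_erase.1 hv).1 (Subtype.ext h))
  · simpa [Subtype.ext_iff] using hv
  · obtain ⟨hax, has⟩ := Finset.mem_erase.1 ha
    exact ⟨⟨a, Set.mem_toFinset.1 has⟩, by simpa [Subtype.ext_iff] using hax, rfl⟩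

lemma Set.ncard_image_val_union_add_ncard_inter {α : Type*} [Finite α] {s t : Set α}
    (A : Set s) (B : Set t) :
    (Subtype.val '' A ∪ Subtype.val '' B).ncard + (Subtype.val '' A ∩ Subtype.val '' B).ncard =
      A.ncard + B.ncard := by
  rw [Set.ncard_union_add_ncard_inter _ _ (Set.toFinite _) (Set.toFinite _),
    Set.ncard_image_of_injective _ Subtype.val_injective,
    Set.ncard_image_of_injective _ Subtype.val_injective]

lemma Set.image_val_inter_image_val_subset {α : Type*} {s t : Set α} (A : Set s) (B : Set t) :
    Subtype.val '' A ∩ Subtype.val '' B ⊆ s ∩ t := by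
  rintro _ ⟨⟨a, -, rfl⟩, ⟨b, -, hb⟩⟩
  exact ⟨a.2, hb ▸ b.2⟩

lemma Set.ncard_image_val_union_add_one {α : Type*} [Finite α] {s t : Set α} {x : α}
    (hmeet : s ∩ t = {x}) (hxs : x ∈ s) (hxt : x ∈ t) {A : Set s} {B : Set t}
    (hA : ⟨x, hxs⟩ ∈ A) (hB : ⟨x, hxt⟩ ∈ B) :
    (Subtype.val '' A ∪ Subtype.val '' B).ncard + 1 = A.ncard + B.ncard := by
  have hAB : Subtype.val '' A ∩ Subtype.val '' B = {x} :=
    (hmeet ▸ Set.image_val_inter_image_val_subset A B).antisymm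
      (Set.singleton_subset_iff.2 ⟨⟨_, hA, rfl⟩, ⟨_, hB, rfl⟩⟩)
  rw [← Set.ncard_image_val_union_add_ncard_inter, hAB, Set.ncard_singleton]

lemma Set.ncard_image_val_union_of_notMem {α : Type*} [Finite α] {s t : Set α} {x : α}
    (hmeet : s ∩ t = {x}) (hxs : x ∈ s) {A : Set s} (B : Set t) (hA : ⟨x, hxs⟩ ∉ A) :
    (Subtype.val '' A ∪ Subtype.val '' B).ncard = A.ncard + B.ncard := by
  have hAB : Subtype.val '' A ∩ Subtype.val '' B = ∅ := by
    refine Set.subset_empty_iff.1 fun w hw => ?_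
    have hwx : w ∈ ({x} : Set α) := hmeet ▸ Set.image_val_inter_image_val_subset A B hw
    obtain ⟨⟨a, ha, rfl⟩, -⟩ := hw
    have hax : a = ⟨x, hxs⟩ := Subtype.ext hwx
    exact hA (hax ▸ ha)
  rw [← Set.ncard_image_val_union_add_ncard_inter, hAB, Set.ncard_empty, add_zero]

namespace SimpleGraph

variable {V : Type*} {T : SimpleGraph V} {s : Set V} {x : V}

lemma Walk.mem_support_of_notMem_of_mem (hs : ∀ u v, T.Adj u v → u ∈ s → v ∉ s → u = x)
    {w v : V} (q : T.Walk w v) (hw : w ∉ s) (hv : v ∈ s) : x ∈ q.support := by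
  obtain ⟨d, hd, hfst, hsnd⟩ := q.reverse.exists_boundary_dart s hv hw
  rw [← hs _ _ d.adj hfst hsnd, ← List.mem_reverse, ← q.support_reverse]
  exact q.reverse.dart_fst_mem_support_of_mem_darts hd

lemma Walk.IsPath.support_subset (hs : ∀ u v, T.Adj u v → u ∈ s → v ∉ s → u = x)
    {u v : V} {p : T.Walk u v} (hp : p.IsPath) (hu : u ∈ s) (hv : v ∈ s) :
    ∀ w ∈ p.support, w ∈ s := by
  induction p with
  | nil => simpa using hu
  | cons h q ih =>
    rename_i a b _
    rw [Walk.cons_isPath_iff] at hp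
    have hb : b ∈ s := by
      by_contra hb
      exact hp.2 (hs _ _ h hu hb ▸ q.mem_support_of_notMem_of_mem hs hb hv)
    simpa [hu] using ih hp.1 hb hv

lemma IsTree.induce_of_forall_adj (hT : T.IsTree) (hx : x ∈ s)
    (hs : ∀ u v, T.Adj u v → u ∈ s → v ∉ s → u = x) : (T.induce s).IsTree := by
  refine ⟨?_, hT.isAcyclic.induce s⟩
  have : Nonempty s := ⟨⟨x, hx⟩⟩
  refine Connected.mk fun u v => ?_
  obtain ⟨p, hp⟩ := (hT.connected.preconnected u v).exists_isPath
  exact ⟨p.induce s (hp.support_subset hs u.2 v.2)⟩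

end SimpleGraph

namespace SimpleGraph.Subgraph

variable {V : Type*} {G : SimpleGraph V} {H K : G.Subgraph} {x : V}

lemma verts_union_eq_univ (hcover : H ⊔ K = ⊤) : H.verts ∪ K.verts = Set.univ := by
  rw [← verts_sup, hcover, verts_top]

lemma adj_or_adj_of_sup_eq_top (hcover : H ⊔ K = ⊤) {u v : V} (h : G.Adj u v) :
    H.Adj u v ∨ K.Adj u v := by
  rwa [← sup_adj, hcover]

lemma adj_of_mem_verts (hcover : H ⊔ K = ⊤) (hmeet : H.verts ∩ K.verts = {x}) {u v : V}
    (h : G.Adj u v) (hu : u ∈ H.verts) (hv : v ∈ H.verts) : H.Adj u v := by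
  refine (adj_or_adj_of_sup_eq_top hcover h).resolve_right fun hK => h.ne ?_
  have hux : u ∈ H.verts ∩ K.verts := ⟨hu, hK.fst_mem⟩
  have hvx : v ∈ H.verts ∩ K.verts := ⟨hv, hK.snd_mem⟩
  rw [hmeet] at hux hvx
  exact hux.trans hvx.symm

lemma eq_of_adj_of_notMem_verts (hcover : H ⊔ K = ⊤) (hmeet : H.verts ∩ K.verts = {x})
    {u v : V} (h : G.Adj u v) (hu : u ∈ H.verts) (hv : v ∉ H.verts) : u = x := by
  have hK : K.Adj u v := (adj_or_adj_of_sup_eq_top hcover h).resolve_left fun hH => hv hH.snd_mem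
  have hux : u ∈ H.verts ∩ K.verts := ⟨hu, hK.fst_mem⟩
  rwa [hmeet] at hux

lemma IsSpanning.isTree_coe_iff {S : G.Subgraph} (h : S.IsSpanning) :
    S.coe.IsTree ↔ S.spanningCoe.IsTree :=
  (S.spanningCoeEquivCoeOfSpanning h).isTree_iff.symm

lemma IsSpanning.comap_hom {T : G.Subgraph} (hT : T.IsSpanning) : (T.comap H.hom).IsSpanning :=
  fun v => hT v

lemma spanningCoe_comap_hom (hcover : H ⊔ K = ⊤) (hmeet : H.verts ∩ K.verts = {x})
    (T : G.Subgraph) : (T.comap H.hom).spanningCoe = T.spanningCoe.induce H.verts := by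
  ext u v
  exact ⟨And.right, fun h => ⟨adj_of_mem_verts hcover hmeet (T.adj_sub h) u.2 v.2, h⟩⟩

lemma isTree_coe_comap_hom (hcover : H ⊔ K = ⊤) (hmeet : H.verts ∩ K.verts = {x})
    (hx : x ∈ H.verts) {T : G.Subgraph} (hT : T.IsSpanning) (htree : T.coe.IsTree) :
    (T.comap H.hom).coe.IsTree := by
  rw [hT.comap_hom.isTree_coe_iff, spanningCoe_comap_hom hcover hmeet]
  exact (hT.isTree_coe_iff.1 htree).induce_of_forall_adj hx
    fun u v h hu hv => eq_of_adj_of_notMem_verts hcover hmeet (T.adj_sub h) hu hv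

lemma adj_iff_of_comap_hom_eq {T T' : G.Subgraph} (heq : T.comap H.hom = T'.comap H.hom)
    {u v : V} (h : H.Adj u v) : T.Adj u v ↔ T'.Adj u v := by
  have := congrArg (fun S : H.coe.Subgraph => S.Adj ⟨u, h.fst_mem⟩ ⟨v, h.snd_mem⟩) heq
  simpa [h] using this

lemma injOn_comap_hom_prod (hcover : H ⊔ K = ⊤) :
    Set.InjOn (fun T : G.Subgraph => (T.comap H.hom, T.comap K.hom)) {T | T.IsSpanning} := by
  intro T hT T' hT' heq
  obtain ⟨hH, hK⟩ := Prod.mk.inj heq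
  refine Subgraph.ext (by rw [isSpanning_iff.1 hT, isSpanning_iff.1 hT']) ?_
  funext u v
  refine propext ⟨fun h => ?_, fun h => ?_⟩
  all_goals rcases adj_or_adj_of_sup_eq_top hcover (Subgraph.adj_sub _ h) with h' | h'
  exacts [(adj_iff_of_comap_hom_eq hH h').1 h, (adj_iff_of_comap_hom_eq hK h').1 h,
    (adj_iff_of_comap_hom_eq hH h').2 h, (adj_iff_of_comap_hom_eq hK h').2 h]

lemma neighborSet_eq_union (hcover : H ⊔ K = ⊤) (v : V) :
    G.neighborSet v = H.neighborSet v ∪ K.neighborSet v := by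
  rw [← neighborSet_sup, hcover, neighborSet_top]

end SimpleGraph.Subgraph

section Bipartition

variable {W : Type*} {A : SimpleGraph W} {X Y : Set W} {x : W}

lemma IsBipartitionOn.notMem_right (hb : IsBipartitionOn A X Y) (hx : x ∈ X) : x ∉ Y :=
  Set.disjoint_left.1 hb.1 hx

lemma IsBipartitionOn.neighborSet_subset (hb : IsBipartitionOn A X Y) (hx : x ∈ X) :
    A.neighborSet x ⊆ Y :=
  fun _ hu => ((hb.2.2 _ _ hu).resolve_right fun h => hb.notMem_right hx h.1).2

lemma IsBipartitionOn.sdeg_le [Finite W] (hb : IsBipartitionOn A X Y) (hx : x ∈ X) :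
    sdeg A x ≤ Y.ncard :=
  Set.ncard_le_ncard (hb.neighborSet_subset hx)

end Bipartition

section Cutvertex

open SimpleGraph Subgraph

variable {V : Type*} {G : SimpleGraph V} {H K : G.Subgraph} {x : V}

lemma spanningTreeCount_le_mul [Finite V] (hcover : H ⊔ K = ⊤) (hmeet : H.verts ∩ K.verts = {x})
    (hxH : x ∈ H.verts) (hxK : x ∈ K.verts) :
    spanningTreeCount G ≤ spanningTreeCount H.coe * spanningTreeCount K.coe := by
  have hmeet' : K.verts ∩ H.verts = {x} := by rwa [Set.inter_comm]
  rw [spanningTreeCount, spanningTreeCount, spanningTreeCount, ← Set.ncard_prod]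
  refine Set.ncard_le_ncard_of_injOn _ (fun T hT => ⟨⟨hT.1.comap_hom, ?_⟩, hT.1.comap_hom, ?_⟩)
    ((injOn_comap_hom_prod hcover).mono fun T hT => hT.1) (Set.toFinite _)
  · exact isTree_coe_comap_hom hcover hmeet hxH hT.1 hT.2
  · exact isTree_coe_comap_hom (sup_comm H K ▸ hcover) hmeet' hxK hT.1 hT.2

lemma sdeg_coe (H : G.Subgraph) (v : H.verts) : sdeg H.coe v = (H.neighborSet v).ncard :=
  Set.ncard_congr' (coeNeighborSetEquiv v)

lemma sdeg_eq_sdeg_coe (hcover : H ⊔ K = ⊤) (hmeet : H.verts ∩ K.verts = {x}) {v : V}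
    (hv : v ∈ H.verts) (hvx : v ≠ x) : sdeg G v = sdeg H.coe ⟨v, hv⟩ := by
  have hK : K.neighborSet v = ∅ := by
    refine Set.eq_empty_of_forall_notMem fun w hw => hvx ?_
    have : v ∈ H.verts ∩ K.verts := ⟨hv, hw.fst_mem⟩
    rwa [hmeet] at this
  rw [sdeg, sdeg_coe, Subgraph.neighborSet_eq_union hcover, hK, Set.union_empty]

lemma sdeg_eq_add [Finite V] (hcover : H ⊔ K = ⊤) (hmeet : H.verts ∩ K.verts = {x})
    (hxH : x ∈ H.verts) (hxK : x ∈ K.verts) :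
    sdeg G x = sdeg H.coe ⟨x, hxH⟩ + sdeg K.coe ⟨x, hxK⟩ := by
  have hdisj : Disjoint (H.neighborSet x) (K.neighborSet x) := by
    refine Set.disjoint_left.2 fun w hH hK => (H.adj_sub hH).ne ?_
    have : w ∈ H.verts ∩ K.verts := ⟨hH.snd_mem, hK.snd_mem⟩
    rw [hmeet] at this
    exact this.symm
  rw [sdeg, sdeg_coe, sdeg_coe, Subgraph.neighborSet_eq_union hcover,
    Set.ncard_union_eq hdisj (Set.toFinite _) (Set.toFinite _)]

lemma prod_sdeg_coe [Fintype V] (hcover : H ⊔ K = ⊤) (hmeet : H.verts ∩ K.verts = {x})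
    (hxH : x ∈ H.verts) :
    ∏ v : H.verts, sdeg H.coe v = sdeg H.coe ⟨x, hxH⟩ * ∏ v ∈ H.verts.toFinset.erase x, sdeg G v :=
  Fintype.prod_subtype_eq_mul_prod_erase hxH _ _
    fun v hv => (sdeg_eq_sdeg_coe hcover hmeet v.2 hv).symm

lemma prod_sdeg [Fintype V] (hcover : H ⊔ K = ⊤) (hmeet : H.verts ∩ K.verts = {x})
    (hxH : x ∈ H.verts) (hxK : x ∈ K.verts) :
    ∏ v, sdeg G v = (sdeg H.coe ⟨x, hxH⟩ + sdeg K.coe ⟨x, hxK⟩) *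
      (∏ v ∈ H.verts.toFinset.erase x, sdeg G v) * ∏ v ∈ K.verts.toFinset.erase x, sdeg G v := by
  rw [Finset.prod_univ_eq_mul_prod_erase_mul_prod_erase (verts_union_eq_univ hcover) hmeet,
    sdeg_eq_add hcover hmeet hxH hxK]

end Cutvertex

theorem stmt7_general {V : Type*} [Fintype V] (G : SimpleGraph V)
    (H₁ H₂ : G.Subgraph)
    (hcover : H₁ ⊔ H₂ = ⊤) (x : V) (hmeet : H₁.verts ∩ H₂.verts = {x})
    (hx₁ : x ∈ H₁.verts) (hx₂ : x ∈ H₂.verts)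
    (X₁ Y₁ : Set ↥H₁.verts) (X₂ Y₂ : Set ↥H₂.verts)
    (hb₁ : IsBipartitionOn H₁.coe X₁ Y₁) (hb₂ : IsBipartitionOn H₂.coe X₂ Y₂)
    (hxX₁ : (⟨x, hx₁⟩ : ↥H₁.verts) ∈ X₁) (hxX₂ : (⟨x, hx₂⟩ : ↥H₂.verts) ∈ X₂)
    (hg₁ : FerrersGood H₁.coe X₁ Y₁) (hg₂ : FerrersGood H₂.coe X₂ Y₂) :
    FerrersGood G ((Subtype.val '' X₁) ∪ (Subtype.val '' X₂))
      ((Subtype.val '' Y₁) ∪ (Subtype.val '' Y₂)) := by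
  have hmeet₂ : H₂.verts ∩ H₁.verts = {x} := by rwa [Set.inter_comm]
  have hT : (spanningTreeCount G : ℚ) ≤ spanningTreeCount H₁.coe * spanningTreeCount H₂.coe := by
    exact_mod_cast spanningTreeCount_le_mul hcover hmeet hx₁ hx₂
  have hX : ((Subtype.val '' X₁ ∪ Subtype.val '' X₂).ncard : ℚ) = X₁.ncard + X₂.ncard - 1 := by
    rw [eq_sub_iff_add_eq]
    exact_mod_cast Set.ncard_image_val_union_add_one hmeet hx₁ hx₂ hxX₁ hxX₂
  unfold FerrersGood at *
  rw [← Nat.cast_prod, prod_sdeg_coe hcover hmeet hx₁] at hg₁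
  rw [← Nat.cast_prod, prod_sdeg_coe (sup_comm H₁ H₂ ▸ hcover) hmeet₂ hx₂] at hg₂
  rw [← Nat.cast_prod, prod_sdeg hcover hmeet hx₁ hx₂, hX,
    Set.ncard_image_val_union_of_notMem hmeet hx₁ Y₂ (hb₁.notMem_right hxX₁), Nat.cast_add]
  set d₁ := sdeg H₁.coe ⟨x, hx₁⟩
  set d₂ := sdeg H₂.coe ⟨x, hx₂⟩
  set R₁ := ∏ v ∈ H₁.verts.toFinset.erase x, sdeg G v
  set R₂ := ∏ v ∈ H₂.verts.toFinset.erase x, sdeg G v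
  have hX₁ : (1 : ℚ) ≤ X₁.ncard := Nat.one_le_cast.2 ((Set.ncard_pos (Set.toFinite _)).2 ⟨_, hxX₁⟩)
  have hX₂ : (1 : ℚ) ≤ X₂.ncard := Nat.one_le_cast.2 ((Set.ncard_pos (Set.toFinite _)).2 ⟨_, hxX₂⟩)
  calc (spanningTreeCount G : ℚ)
      ≤ (d₁ * R₁ : ℕ) / ((X₁.ncard : ℚ) * Y₁.ncard) *
          ((d₂ * R₂ : ℕ) / ((X₂.ncard : ℚ) * Y₂.ncard)) :=
        hT.trans (mul_le_mul hg₁ hg₂ (by positivity) (by positivity))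
    _ = R₁ * R₂ * (d₁ / (X₁.ncard * Y₁.ncard) * (d₂ / (X₂.ncard * Y₂.ncard))) := by
        push_cast; ring
    _ ≤ R₁ * R₂ * ((d₁ + d₂) / ((X₁.ncard + X₂.ncard - 1) * (Y₁.ncard + Y₂.ncard))) := by
        gcongr
        exact div_mul_div_le_add_div hX₁ hX₂ (by positivity) (by exact_mod_cast hb₁.sdeg_le hxX₁)
          (by positivity) (by exact_mod_cast hb₂.sdeg_le hxX₂)
    _ = ((d₁ + d₂) * R₁ * R₂ : ℕ) / ((X₁.ncard + X₂.ncard - 1) * (Y₁.ncard + Y₂.ncard : ℚ)) := by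
        push_cast; ring

theorem stmt7 {V : Type*} [Fintype V] (G : SimpleGraph V) (hconn : G.Connected)
    (H₁ H₂ : G.Subgraph)
    (hcover : H₁ ⊔ H₂ = ⊤) (x : V) (hmeet : H₁.verts ∩ H₂.verts = {x})
    (hx₁ : x ∈ H₁.verts) (hx₂ : x ∈ H₂.verts)
    (hprop₁ : H₁.verts ≠ Set.univ) (hprop₂ : H₂.verts ≠ Set.univ)
    (X₁ Y₁ : Set ↥H₁.verts) (X₂ Y₂ : Set ↥H₂.verts)
    (hb₁ : IsBipartitionOn H₁.coe X₁ Y₁) (hb₂ : IsBipartitionOn H₂.coe X₂ Y₂)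
    (hxX₁ : (⟨x, hx₁⟩ : ↥H₁.verts) ∈ X₁) (hxX₂ : (⟨x, hx₂⟩ : ↥H₂.verts) ∈ X₂)
    (hg₁ : FerrersGood H₁.coe X₁ Y₁) (hg₂ : FerrersGood H₂.coe X₂ Y₂) :
    FerrersGood G ((Subtype.val '' X₁) ∪ (Subtype.val '' X₂))
      ((Subtype.val '' Y₁) ∪ (Subtype.val '' Y₂)) :=
  stmt7_general G H₁ H₂ hcover x hmeet hx₁ hx₂ X₁ Y₁ X₂ Y₂ hb₁ hb₂ hxX₁ hxX₂ hg₁ hg₂
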